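/- arXiv:1605.09148 — 4 statements merged into one kernel-verified Lean document; each statement's English description precedes it below -/
import Mathlib

section
/- Let Q ∈ ℝ^{m×n} be a nonzero matrix with nonzero columns q_1,…,q_n, let x_0 ∈ ℝ^m, and let x* be the unique point of minimum Euclidean norm in the affine space x_0 + Im(Q). Define a random sequence (x_t) starting at x_0 where, given x_t, an index i ∈ {1,…,n} is chosen independently with probability ‖q_i‖²/‖Q‖²_Frob and x_{t+1} = x_t − (x_tᵀq_i/‖q_i‖²)·q_i. Then for every t ≥ 0, 𝔼‖x_t − x*‖² ≤ (1 − σ²_min(Q)/‖Q‖²_Frob)^t · ‖x_0 − x*‖². -/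
open Matrix

/-- One step of the iteration `x ↦ x − (xᵀqᵢ/‖qᵢ‖²)·qᵢ`, where `qᵢ` is the
`i`-th column of `Q`. -/
noncomputable def kaczStep {m n : ℕ} (Q : Matrix (Fin m) (Fin n) ℝ)
    (x : Fin m → ℝ) (i : Fin n) : Fin m → ℝ :=
  x - ((x ⬝ᵥ fun r => Q r i) / ((fun r => Q r i) ⬝ᵥ fun r => Q r i)) • fun r => Q r i

/-!
Since `x*` has minimum norm on `x₀ + Im Q`, it is orthogonal to `Im Q`; hence the error
`e = x − x*` stays in `Im Q` and each step removes from it its component along the chosen column.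
By Pythagoras, averaging over the column gives the expected squared error `‖e‖² − ‖Qᵀe‖²/‖Q‖²_F`
after one step. On `Im Q` we have `‖Qᵀe‖² ≥ σ²_min ‖e‖²`, because `(QᵀQ)² − σ²_min QᵀQ` is
positive semidefinite (every eigenvalue of `QᵀQ` is `0` or at least `σ²_min`), so each step
contracts the expected squared error by `1 − σ²_min/‖Q‖²_F`; conditioning on the first index
iterates this.
-/

section DotProduct

variable {m n : Type*} [Fintype m] [Fintype n]

theorem dotProduct_eq_zero_of_forall_dotProduct_self_le {x v : m → ℝ}
    (h : ∀ ε : ℝ, x ⬝ᵥ x ≤ (x + ε • v) ⬝ᵥ (x + ε • v)) : x ⬝ᵥ v = 0 := by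
  have hdisc : discrim (v ⬝ᵥ v) (2 * (x ⬝ᵥ v)) 0 ≤ 0 := discrim_le_zero fun ε => by
    have hε := h ε
    simp only [add_dotProduct, dotProduct_add, smul_dotProduct, dotProduct_smul, smul_eq_mul,
      dotProduct_comm v x] at hε
    linarith
  rw [discrim] at hdisc
  exact pow_eq_zero_iff two_ne_zero |>.mp (by nlinarith [sq_nonneg (x ⬝ᵥ v)])

theorem transpose_mulVec_eq_zero_of_forall_le {Q : Matrix m n ℝ} {x : m → ℝ}
    (h : ∀ y, x ⬝ᵥ x ≤ (x + Q *ᵥ y) ⬝ᵥ (x + Q *ᵥ y)) : Qᵀ *ᵥ x = 0 := by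
  have horth (y : n → ℝ) : x ⬝ᵥ Q *ᵥ y = 0 :=
    dotProduct_eq_zero_of_forall_dotProduct_self_le fun ε => by
      simpa only [mulVec_smul] using h (ε • y)
  rw [← dotProduct_self_eq_zero, mulVec_transpose, ← dotProduct_mulVec, horth]

theorem dotProduct_self_transpose_mulVec_le (Q : Matrix m n ℝ) (e : m → ℝ) :
    (Qᵀ *ᵥ e) ⬝ᵥ (Qᵀ *ᵥ e) ≤ trace (Qᵀ * Q) * (e ⬝ᵥ e) := by
  simp only [dotProduct, trace, diag, mulVec, transpose_apply, mul_apply]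
  rw [Finset.sum_mul]
  refine Finset.sum_le_sum fun j _ => ?_
  simpa only [sq] using Finset.sum_mul_sq_le_sq_mul_sq Finset.univ (fun i => Q i j) e

theorem trace_transpose_mul_self_pos {Q : Matrix m n ℝ} (hQ : Q ≠ 0) : 0 < trace (Qᵀ * Q) := by
  obtain ⟨i, j, hij⟩ : ∃ i j, Q i j ≠ 0 := by
    by_contra! h
    exact hQ (ext h)
  simp only [trace, diag, mul_apply, transpose_apply]
  exact Finset.sum_pos' (fun _ _ => Finset.sum_nonneg fun _ _ => mul_self_nonneg _)
    ⟨j, Finset.mem_univ _, Finset.sum_pos' (fun _ _ => mul_self_nonneg _)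
      ⟨i, Finset.mem_univ _, mul_self_pos.mpr hij⟩⟩

-- Also for `q = 0`, where the coefficient is `0 / 0 = 0`; so zero columns are harmless below.
theorem dotProduct_self_mul_sub_proj (e q : m → ℝ) :
    (q ⬝ᵥ q) * ((e - ((e ⬝ᵥ q) / (q ⬝ᵥ q)) • q) ⬝ᵥ (e - ((e ⬝ᵥ q) / (q ⬝ᵥ q)) • q))
      = (q ⬝ᵥ q) * (e ⬝ᵥ e) - (e ⬝ᵥ q) ^ 2 := by
  by_cases hq : q = 0
  · simp [hq]
  have hqq : q ⬝ᵥ q ≠ 0 := dotProduct_self_eq_zero.not.mpr hq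
  simp only [sub_dotProduct, dotProduct_sub, smul_dotProduct, dotProduct_smul, smul_eq_mul,
    dotProduct_comm q e]
  field_simp
  ring

theorem dotProduct_mulVec_self (Q : Matrix m n ℝ) (y : n → ℝ) :
    (Q *ᵥ y) ⬝ᵥ (Q *ᵥ y) = y ⬝ᵥ (Qᵀ * Q) *ᵥ y := by
  rw [dotProduct_mulVec, ← mulVec_transpose, ← mulVec_mulVec, dotProduct_comm]

end DotProduct

section Spectrum

variable {m n : Type*} [Fintype m] [Fintype n] [DecidableEq n]

theorem Matrix.exists_mulVec_eq_smul_of_mem_spectrum {K : Type*} [Field K] {A : Matrix n n K}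
    {μ : K} (h : μ ∈ spectrum K A) : ∃ v : n → K, v ≠ 0 ∧ A *ᵥ v = μ • v := by
  rw [← spectrum_toLin', ← Module.End.hasEigenvalue_iff_mem_spectrum] at h
  obtain ⟨v, hv⟩ := h.exists_hasEigenvector
  exact ⟨v, hv.2, by simpa using Module.End.mem_eigenspace_iff.mp hv.1⟩

open scoped MatrixOrder in
theorem Matrix.PosSemidef.posSemidef_mul_self_sub_smul {A : Matrix n n ℝ} (hA : A.PosSemidef)
    {σ : ℝ} (hσ : ∀ μ ∈ spectrum ℝ A, μ ≠ 0 → σ ≤ μ) : (A * A - σ • A).PosSemidef := by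
  have hcfc : A * A - σ • A = cfc (fun x : ℝ => x * x - σ * x) A := by
    rw [cfc_sub _ _ A, cfc_mul _ _ A, cfc_const_mul _ _ A, cfc_id' ℝ A]
  rw [← nonneg_iff_posSemidef, hcfc]
  refine cfc_nonneg fun μ hμ => ?_
  have hμ0 : 0 ≤ μ := (posSemidef_iff_isHermitian_and_spectrum_nonneg.mp hA).2 hμ
  rcases eq_or_ne μ 0 with rfl | hne
  · simp
  · nlinarith [hσ μ hμ hne]

theorem smul_dotProduct_self_mulVec_le {Q : Matrix m n ℝ} {σ : ℝ}
    (hσ : σ ∈ lowerBounds {μ : ℝ | μ ≠ 0 ∧ ∃ v : n → ℝ, v ≠ 0 ∧ (Qᵀ * Q) *ᵥ v = μ • v})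
    (y : n → ℝ) : σ * ((Q *ᵥ y) ⬝ᵥ (Q *ᵥ y)) ≤ (Qᵀ *ᵥ Q *ᵥ y) ⬝ᵥ (Qᵀ *ᵥ Q *ᵥ y) := by
  have hA : (Qᵀ * Q).PosSemidef := by simpa using posSemidef_conjTranspose_mul_self Q
  have h := (hA.posSemidef_mul_self_sub_smul fun μ hμ hne =>
    hσ ⟨hne, exists_mulVec_eq_smul_of_mem_spectrum hμ⟩).dotProduct_mulVec_nonneg y
  rw [mulVec_mulVec, dotProduct_mulVec_self, dotProduct_mulVec_self,
    transpose_mul, transpose_transpose]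
  simpa [sub_mulVec, smul_mulVec, dotProduct_sub, dotProduct_smul] using h

theorem le_trace_transpose_mul_self {Q : Matrix m n ℝ} (hQ : Q ≠ 0) {σ : ℝ}
    (hσ : σ ∈ lowerBounds {μ : ℝ | μ ≠ 0 ∧ ∃ v : n → ℝ, v ≠ 0 ∧ (Qᵀ * Q) *ᵥ v = μ • v}) :
    σ ≤ trace (Qᵀ * Q) := by
  obtain ⟨y, hy⟩ : ∃ y, Q *ᵥ y ≠ 0 := by
    by_contra! h
    exact hQ (ext_iff_mulVec.mpr fun v => by simpa using h v)
  have hpos : 0 < (Q *ᵥ y) ⬝ᵥ (Q *ᵥ y) :=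
    lt_of_le_of_ne (Finset.sum_nonneg fun _ _ => mul_self_nonneg _)
      (Ne.symm (dotProduct_self_eq_zero.not.mpr hy))
  exact le_of_mul_le_mul_right
    ((smul_dotProduct_self_mulVec_le hσ y).trans (dotProduct_self_transpose_mulVec_le Q _)) hpos

end Spectrum

section PathExpectation

variable {X ι : Type*} [Fintype ι]

noncomputable def pathExpectation (p : ι → ℝ) (k : X → ι → X) (E : X → ℝ) (x : X) (t : ℕ) :
    ℝ :=
  ∑ ω : Fin t → ι, (∏ s, p (ω s)) * E ((List.ofFn ω).foldl k x)

variable (p : ι → ℝ) (k : X → ι → X) (E : X → ℝ)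

theorem pathExpectation_zero (x : X) : pathExpectation p k E x 0 = E x := by
  simp [pathExpectation]

theorem pathExpectation_succ (x : X) (t : ℕ) :
    pathExpectation p k E x (t + 1) = ∑ i, p i * pathExpectation p k E (k x i) t := by
  rw [pathExpectation, ← (Fin.consEquiv fun _ => ι).sum_comp, Fintype.sum_prod_type]
  refine Finset.sum_congr rfl fun i _ => ?_
  rw [pathExpectation, Finset.mul_sum]
  refine Finset.sum_congr rfl fun ω _ => ?_
  simp only [Fin.consEquiv_apply, Fin.prod_univ_succ, List.ofFn_succ, Fin.cons_zero,
    Fin.cons_succ, List.foldl_cons, mul_assoc]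

theorem pathExpectation_le_pow_mul {S : Set X} {ρ : ℝ} (hp : ∀ i, 0 ≤ p i) (hρ : 0 ≤ ρ)
    (hS : ∀ x ∈ S, ∀ i, k x i ∈ S) (hstep : ∀ x ∈ S, ∑ i, p i * E (k x i) ≤ ρ * E x)
    (t : ℕ) {x : X} (hx : x ∈ S) : pathExpectation p k E x t ≤ ρ ^ t * E x := by
  induction t generalizing x with
  | zero => simp [pathExpectation_zero]
  | succ t ih =>
    calc pathExpectation p k E x (t + 1)
        ≤ ∑ i, p i * (ρ ^ t * E (k x i)) := by
          rw [pathExpectation_succ]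
          exact Finset.sum_le_sum fun i _ =>
            mul_le_mul_of_nonneg_left (ih (hS x hx i)) (hp i)
      _ = ρ ^ t * ∑ i, p i * E (k x i) := by
          rw [Finset.mul_sum]
          exact Finset.sum_congr rfl fun i _ => by ring
      _ ≤ ρ ^ t * (ρ * E x) := mul_le_mul_of_nonneg_left (hstep x hx) (pow_nonneg hρ t)
      _ = ρ ^ (t + 1) * E x := by ring

end PathExpectation

section KaczStep

variable {m n : ℕ} (Q : Matrix (Fin m) (Fin n) ℝ)

theorem kaczStep_eq (x : Fin m → ℝ) (i : Fin n) :
    kaczStep Q x i = x - ((x ⬝ᵥ Q.col i) / (Q.col i ⬝ᵥ Q.col i)) • Q.col i :=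
  rfl

theorem kaczStep_sub_eq {xstar : Fin m → ℝ} (hxstar : Qᵀ *ᵥ xstar = 0) (x : Fin m → ℝ) (i : Fin n) :
    kaczStep Q x i - xstar
      = (x - xstar) - (((x - xstar) ⬝ᵥ Q.col i) / (Q.col i ⬝ᵥ Q.col i)) • Q.col i := by
  have hi : xstar ⬝ᵥ Q.col i = 0 := by
    rw [dotProduct_comm]
    exact congrFun hxstar i
  rw [kaczStep_eq, sub_dotProduct, hi, sub_zero]
  abel

theorem kaczStep_sub_mem_range {x v : Fin m → ℝ} (hx : x - v ∈ LinearMap.range Q.mulVecLin)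
    (i : Fin n) : kaczStep Q x i - v ∈ LinearMap.range Q.mulVecLin := by
  have hcol : Q.col i ∈ LinearMap.range Q.mulVecLin := ⟨Pi.single i 1, mulVec_single_one Q i⟩
  rw [kaczStep_eq, sub_right_comm]
  exact sub_mem hx (Submodule.smul_mem _ _ hcol)

theorem sum_mul_dotProduct_self_kaczStep_sub {xstar : Fin m → ℝ} (hxstar : Qᵀ *ᵥ xstar = 0)
    (x : Fin m → ℝ) :
    ∑ i, (Q.col i ⬝ᵥ Q.col i) * ((kaczStep Q x i - xstar) ⬝ᵥ (kaczStep Q x i - xstar))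
      = trace (Qᵀ * Q) * ((x - xstar) ⬝ᵥ (x - xstar))
          - (Qᵀ *ᵥ (x - xstar)) ⬝ᵥ (Qᵀ *ᵥ (x - xstar)) := by
  simp only [kaczStep_sub_eq Q hxstar, dotProduct_self_mul_sub_proj, Finset.sum_sub_distrib,
    ← Finset.sum_mul]
  congr 1
  exact Finset.sum_congr rfl fun i _ => by rw [sq, dotProduct_comm]; rfl

theorem sum_div_mul_dotProduct_self_kaczStep_sub_le (hQ : Q ≠ 0) {xstar : Fin m → ℝ}
    (hxstar : Qᵀ *ᵥ xstar = 0) {σ : ℝ}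
    (hσ : σ ∈ lowerBounds {μ : ℝ | μ ≠ 0 ∧ ∃ v : Fin n → ℝ, v ≠ 0 ∧ (Qᵀ * Q) *ᵥ v = μ • v})
    {x : Fin m → ℝ} (hx : x - xstar ∈ LinearMap.range Q.mulVecLin) :
    ∑ i, (Q.col i ⬝ᵥ Q.col i / trace (Qᵀ * Q))
        * ((kaczStep Q x i - xstar) ⬝ᵥ (kaczStep Q x i - xstar))
      ≤ (1 - σ / trace (Qᵀ * Q)) * ((x - xstar) ⬝ᵥ (x - xstar)) := by
  obtain ⟨y, hy⟩ := hx
  have hT := trace_transpose_mul_self_pos hQ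
  have hbound := smul_dotProduct_self_mulVec_le hσ y
  rw [mulVecLin_apply] at hy
  rw [hy] at hbound
  simp only [div_mul_eq_mul_div, ← Finset.sum_div, sum_mul_dotProduct_self_kaczStep_sub Q hxstar]
  have hρT : (1 - σ / trace (Qᵀ * Q)) * ((x - xstar) ⬝ᵥ (x - xstar)) * trace (Qᵀ * Q)
      = trace (Qᵀ * Q) * ((x - xstar) ⬝ᵥ (x - xstar)) - σ * ((x - xstar) ⬝ᵥ (x - xstar)) := by
    field_simp
  rw [div_le_iff₀ hT, hρT]
  linarith

end KaczStep

theorem stmt0_general {m n : ℕ} (Q : Matrix (Fin m) (Fin n) ℝ) (hQ : Q ≠ 0)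
    (x0 xstar : Fin m → ℝ)
    (hmem : ∃ y : Fin n → ℝ, xstar = x0 + Q *ᵥ y)
    (hmin : ∀ y : Fin n → ℝ, xstar ⬝ᵥ xstar ≤ (x0 + Q *ᵥ y) ⬝ᵥ (x0 + Q *ᵥ y))
    (σsq : ℝ)
    (hσ : IsLeast {μ : ℝ | μ ≠ 0 ∧ ∃ v : Fin n → ℝ, v ≠ 0 ∧ (Qᵀ * Q) *ᵥ v = μ • v} σsq)
    (t : ℕ) :
    ∑ ω : Fin t → Fin n,
        (∏ s : Fin t,
            (((fun r => Q r (ω s)) ⬝ᵥ fun r => Q r (ω s)) / Matrix.trace (Qᵀ * Q))) *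
          (((List.ofFn ω).foldl (kaczStep Q) x0 - xstar) ⬝ᵥ
            ((List.ofFn ω).foldl (kaczStep Q) x0 - xstar))
      ≤ (1 - σsq / Matrix.trace (Qᵀ * Q)) ^ t * ((x0 - xstar) ⬝ᵥ (x0 - xstar)) := by
  obtain ⟨y0, hy0⟩ := hmem
  have hT := trace_transpose_mul_self_pos hQ
  have hxstar : Qᵀ *ᵥ xstar = 0 := transpose_mulVec_eq_zero_of_forall_le fun y => by
    simpa only [hy0, mulVec_add, add_assoc] using hmin (y0 + y)
  have hρ : 0 ≤ 1 - σsq / trace (Qᵀ * Q) :=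
    sub_nonneg.mpr ((div_le_one hT).mpr (le_trace_transpose_mul_self hQ hσ.2))
  have hx0 : x0 - xstar ∈ LinearMap.range Q.mulVecLin := ⟨-y0, by simp [hy0, mulVec_neg]⟩
  exact pathExpectation_le_pow_mul (fun i => Q.col i ⬝ᵥ Q.col i / trace (Qᵀ * Q)) (kaczStep Q)
    (fun x => (x - xstar) ⬝ᵥ (x - xstar)) (S := {x | x - xstar ∈ LinearMap.range Q.mulVecLin})
    (fun i => div_nonneg (Finset.sum_nonneg fun _ _ => mul_self_nonneg _) hT.le) hρ
    (fun _ hx i => kaczStep_sub_mem_range Q hx i)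
    (fun _ hx => sum_div_mul_dotProduct_self_kaczStep_sub_le Q hQ hxstar hσ.2 hx) t hx0

/-- Let `Q ∈ ℝ^{m×n}` be a nonzero matrix with nonzero columns
`q₁,…,qₙ`, let `x₀ ∈ ℝ^m`, and let `x*` be the (unique) point of minimum
Euclidean norm in the affine space `x₀ + Im(Q)`. Define a random sequence
`(x_t)` starting at `x₀` where, given `x_t`, an index `i` is chosen
independently with probability `‖qᵢ‖²/‖Q‖²_Frob` and
`x_{t+1} = x_t − (x_tᵀqᵢ/‖qᵢ‖²)·qᵢ`. Then for every `t ≥ 0`,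
`𝔼‖x_t − x*‖² ≤ (1 − σ²_min(Q)/‖Q‖²_Frob)^t · ‖x₀ − x*‖²`.
The expectation is written explicitly as the sum, over all sequences
`ω : Fin t → Fin n` of chosen indices, of the probability of `ω` times the
squared error of the resulting iterate; `‖Q‖²_Frob = trace (Qᵀ * Q)`, and
`σ²_min(Q)` is the smallest nonzero eigenvalue of `QᵀQ`. -/
theorem stmt0 {m n : ℕ} (Q : Matrix (Fin m) (Fin n) ℝ) (hQ : Q ≠ 0)
    (hcols : ∀ i : Fin n, (fun r => Q r i) ≠ (0 : Fin m → ℝ))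
    (x0 xstar : Fin m → ℝ)
    (hmem : ∃ y : Fin n → ℝ, xstar = x0 + Q *ᵥ y)
    (hmin : ∀ y : Fin n → ℝ, xstar ⬝ᵥ xstar ≤ (x0 + Q *ᵥ y) ⬝ᵥ (x0 + Q *ᵥ y))
    (σsq : ℝ)
    (hσ : IsLeast {μ : ℝ | μ ≠ 0 ∧ ∃ v : Fin n → ℝ, v ≠ 0 ∧ (Qᵀ * Q) *ᵥ v = μ • v} σsq)
    (t : ℕ) :
    ∑ ω : Fin t → Fin n,
        (∏ s : Fin t,
            (((fun r => Q r (ω s)) ⬝ᵥ fun r => Q r (ω s)) / Matrix.trace (Qᵀ * Q))) *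
          (((List.ofFn ω).foldl (kaczStep Q) x0 - xstar) ⬝ᵥ
            ((List.ofFn ω).foldl (kaczStep Q) x0 - xstar))
      ≤ (1 - σsq / Matrix.trace (Qᵀ * Q)) ^ t * ((x0 - xstar) ⬝ᵥ (x0 - xstar)) :=
  stmt0_general Q hQ x0 xstar hmem hmin σsq hσ t
end

section
/- Let Q ∈ ℝ^{m×n} be a nonzero matrix with nonzero columns q_1,…,q_n, let x_0 ∈ ℝ^m, and let x* be the minimum-norm point of the affine space x_0 + Im(Q). Then for every x ∈ x_0 + Im(Q): Σ_{i=1}^n (‖q_i‖²/‖Q‖²_Frob) · ‖(x − (⟨x,q_i⟩/‖q_i‖²)q_i) − x*‖² ≤ (1 − σ²_min(Q)/‖Q‖²_Frob) · ‖x − x*‖². -/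
/-!
Since `x*` is the point of `x₀ + Im Q` closest to the origin, it is orthogonal to `Im Q`, so
`⟨x, qᵢ⟩ = ⟨e, qᵢ⟩` for the error `e = x − x* = Q z`. Each step therefore replaces `e` by its
projection onto `qᵢ^⊥`, and the weighted sum of the new squared errors is
`‖e‖² − ‖Qᵀ e‖² / ‖Q‖²_Frob`. Finally `‖Qᵀ e‖² = ‖QᵀQ z‖² ≥ σ²_min ⟨z, QᵀQ z⟩ = σ²_min ‖e‖²`,
as one sees by expanding `z` in an orthonormal eigenbasis of `QᵀQ`: every eigenvalue `λ` of
`QᵀQ` is `0` or at least `σ²_min`, so `σ²_min λ ≤ λ²`.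
-/

open Matrix

section DotProduct

variable {ι κ : Type*} [Fintype ι] [Fintype κ]

theorem dotProduct_eq_zero_of_forall_le_dotProduct_self_add_smul {a u : ι → ℝ}
    (h : ∀ t : ℝ, a ⬝ᵥ a ≤ (a + t • u) ⬝ᵥ (a + t • u)) : a ⬝ᵥ u = 0 := by
  have hquad : ∀ t : ℝ, 0 ≤ (u ⬝ᵥ u) * (t * t) + 2 * (a ⬝ᵥ u) * t + 0 := fun t => by
    have := h t
    simp only [add_dotProduct, dotProduct_add, smul_dotProduct, dotProduct_smul, smul_eq_mul,
      dotProduct_comm u a] at this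
    linarith
  have hdiscrim := discrim_le_zero hquad
  rw [discrim] at hdiscrim
  nlinarith [sq_nonneg (a ⬝ᵥ u)]

theorem dotProduct_mulVec_eq_zero_of_forall_le (Q : Matrix ι κ ℝ)
    {x0 xstar : ι → ℝ} (hmem : ∃ y : κ → ℝ, xstar = x0 + Q *ᵥ y)
    (hmin : ∀ y : κ → ℝ, xstar ⬝ᵥ xstar ≤ (x0 + Q *ᵥ y) ⬝ᵥ (x0 + Q *ᵥ y)) (v : κ → ℝ) :
    xstar ⬝ᵥ Q *ᵥ v = 0 := by
  obtain ⟨ystar, rfl⟩ := hmem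
  refine dotProduct_eq_zero_of_forall_le_dotProduct_self_add_smul fun t => ?_
  simpa only [mulVec_add, mulVec_smul, add_assoc] using hmin (ystar + t • v)

theorem dotProduct_self_mul_dotProduct_self_sub_smul (e q : ι → ℝ) :
    (q ⬝ᵥ q) * ((e - (e ⬝ᵥ q / (q ⬝ᵥ q)) • q) ⬝ᵥ (e - (e ⬝ᵥ q / (q ⬝ᵥ q)) • q))
      = (q ⬝ᵥ q) * (e ⬝ᵥ e) - (e ⬝ᵥ q) ^ 2 := by
  rcases eq_or_ne (q ⬝ᵥ q) 0 with hq | hq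
  · simp [dotProduct_self_eq_zero.mp hq]
  simp only [sub_dotProduct, dotProduct_sub, smul_dotProduct, dotProduct_smul, smul_eq_mul,
    dotProduct_comm q e]
  field_simp
  ring

theorem trace_transpose_mul_self_eq_sum (Q : Matrix ι κ ℝ) :
    trace (Qᵀ * Q) = ∑ i, (fun r => Q r i) ⬝ᵥ fun r => Q r i :=
  rfl

theorem sum_mul_dotProduct_self_sub_smul (Q : Matrix ι κ ℝ) (e : ι → ℝ) :
    ∑ i, (((fun r => Q r i) ⬝ᵥ fun r => Q r i) / trace (Qᵀ * Q)) *
        ((e - ((e ⬝ᵥ fun r => Q r i) / ((fun r => Q r i) ⬝ᵥ fun r => Q r i)) • fun r => Q r i) ⬝ᵥ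
          (e - ((e ⬝ᵥ fun r => Q r i) / ((fun r => Q r i) ⬝ᵥ fun r => Q r i)) • fun r => Q r i))
      = (trace (Qᵀ * Q) * (e ⬝ᵥ e) - (e ᵥ* Q) ⬝ᵥ (e ᵥ* Q)) / trace (Qᵀ * Q) := by
  simp_rw [div_mul_eq_mul_div, ← Finset.sum_div, dotProduct_self_mul_dotProduct_self_sub_smul,
    Finset.sum_sub_distrib, ← Finset.sum_mul, ← trace_transpose_mul_self_eq_sum, sq]
  -- `(e ᵥ* Q) i` unfolds to `e ⬝ᵥ qᵢ`
  rfl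

theorem Matrix.IsHermitian.mul_dotProduct_mulVec_le [DecidableEq ι] {A : Matrix ι ι ℝ}
    (hA : A.IsHermitian) {σ : ℝ} (hσ : ∀ i, σ * hA.eigenvalues i ≤ hA.eigenvalues i ^ 2)
    (z : ι → ℝ) : σ * (z ⬝ᵥ A *ᵥ z) ≤ (A *ᵥ z) ⬝ᵥ (A *ᵥ z) := by
  set b := hA.eigenvectorBasis
  have parseval (x y : ι → ℝ) : x ⬝ᵥ y = ∑ i, (b i ⬝ᵥ x) * (b i ⬝ᵥ y) := by
    have := b.sum_inner_mul_inner (WithLp.toLp 2 x) (WithLp.toLp 2 y)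
    simp only [EuclideanSpace.inner_eq_star_dotProduct, star_trivial] at this
    simp only [← this, dotProduct_comm y, dotProduct_comm x y]
  have hcoeff (i : ι) : b i ⬝ᵥ A *ᵥ z = hA.eigenvalues i * (b i ⬝ᵥ z) := by
    rw [dotProduct_mulVec, ← mulVec_transpose, ← conjTranspose_eq_transpose_of_trivial, hA.eq,
      mulVec_eigenvectorBasis, smul_dotProduct, smul_eq_mul]
  rw [parseval z, parseval (A *ᵥ z), Finset.mul_sum]
  refine Finset.sum_le_sum fun i _ => ?_
  rw [hcoeff]
  nlinarith [mul_le_mul_of_nonneg_right (hσ i) (sq_nonneg (b i ⬝ᵥ z))]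

theorem mul_dotProduct_self_le_of_mem_lowerBounds_eigenvalues [DecidableEq κ]
    (Q : Matrix ι κ ℝ) {σ : ℝ}
    (hσ : σ ∈ lowerBounds {μ : ℝ | μ ≠ 0 ∧ ∃ v : κ → ℝ, v ≠ 0 ∧ (Qᵀ * Q) *ᵥ v = μ • v})
    (z : κ → ℝ) : σ * (Q *ᵥ z ⬝ᵥ Q *ᵥ z) ≤ ((Q *ᵥ z) ᵥ* Q) ⬝ᵥ ((Q *ᵥ z) ᵥ* Q) := by
  have hgram : Qᴴ = Qᵀ := conjTranspose_eq_transpose_of_trivial Q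
  have hA : (Qᵀ * Q).IsHermitian := hgram ▸ isHermitian_conjTranspose_mul_self Q
  have hpsd : (Qᵀ * Q).PosSemidef := hgram ▸ posSemidef_conjTranspose_mul_self Q
  have hbound (i : κ) : σ * hA.eigenvalues i ≤ hA.eigenvalues i ^ 2 := by
    rcases eq_or_ne (hA.eigenvalues i) 0 with h0 | h0
    · simp [h0]
    have hle : σ ≤ hA.eigenvalues i := hσ ⟨h0, hA.eigenvectorBasis i,
      by simpa using hA.eigenvectorBasis.orthonormal.ne_zero i, hA.mulVec_eigenvectorBasis i⟩
    nlinarith [hpsd.eigenvalues_nonneg i]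
  have hgram_mulVec : (Qᵀ * Q) *ᵥ z = (Q *ᵥ z) ᵥ* Q := by
    rw [← mulVec_mulVec, mulVec_transpose]
  have hquad : z ⬝ᵥ (Qᵀ * Q) *ᵥ z = Q *ᵥ z ⬝ᵥ Q *ᵥ z := by
    rw [hgram_mulVec, dotProduct_comm, ← dotProduct_mulVec]
  rw [← hquad, ← hgram_mulVec]
  exact hA.mul_dotProduct_mulVec_le hbound z

end DotProduct

theorem kaczStep_sub_of_forall_dotProduct_mulVec_eq_zero {m n : ℕ}
    (Q : Matrix (Fin m) (Fin n) ℝ) {xstar : Fin m → ℝ} (h : ∀ v, xstar ⬝ᵥ Q *ᵥ v = 0)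
    (x : Fin m → ℝ) (i : Fin n) :
    kaczStep Q x i - xstar = (x - xstar) - (((x - xstar) ⬝ᵥ fun r => Q r i) /
      ((fun r => Q r i) ⬝ᵥ fun r => Q r i)) • fun r => Q r i := by
  have hcol : xstar ⬝ᵥ (fun r => Q r i) = 0 := by
    rw [← h (Pi.single i 1), mulVec_single_one]
    rfl
  rw [kaczStep, sub_dotProduct, hcol, sub_zero, sub_right_comm]

theorem stmt4_general {m n : ℕ} (Q : Matrix (Fin m) (Fin n) ℝ)
    (x0 xstar : Fin m → ℝ)
    (hmem : ∃ y : Fin n → ℝ, xstar = x0 + Q *ᵥ y)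
    (hmin : ∀ y : Fin n → ℝ, xstar ⬝ᵥ xstar ≤ (x0 + Q *ᵥ y) ⬝ᵥ (x0 + Q *ᵥ y))
    (σsq : ℝ)
    (hσ : IsLeast {μ : ℝ | μ ≠ 0 ∧ ∃ v : Fin n → ℝ, v ≠ 0 ∧ (Qᵀ * Q) *ᵥ v = μ • v} σsq) :
    ∀ x : Fin m → ℝ, (∃ y : Fin n → ℝ, x = x0 + Q *ᵥ y) →
      ∑ i : Fin n,
          ((((fun r => Q r i) ⬝ᵥ fun r => Q r i) / Matrix.trace (Qᵀ * Q)) *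
            ((kaczStep Q x i - xstar) ⬝ᵥ (kaczStep Q x i - xstar)))
        ≤ (1 - σsq / Matrix.trace (Qᵀ * Q)) * ((x - xstar) ⬝ᵥ (x - xstar)) := by
  rintro x ⟨y, rfl⟩
  have hperp := dotProduct_mulVec_eq_zero_of_forall_le Q hmem hmin
  obtain ⟨ystar, rfl⟩ := hmem
  have herr : x0 + Q *ᵥ y - (x0 + Q *ᵥ ystar) = Q *ᵥ (y - ystar) := by
    rw [mulVec_sub]
    abel
  simp_rw [kaczStep_sub_of_forall_dotProduct_mulVec_eq_zero Q hperp,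
    sum_mul_dotProduct_self_sub_smul, herr]
  have hspec := mul_dotProduct_self_le_of_mem_lowerBounds_eigenvalues Q hσ.2 (y - ystar)
  have hT : 0 ≤ trace (Qᵀ * Q) := by
    rw [trace_transpose_mul_self_eq_sum]
    exact Finset.sum_nonneg fun i _ => Finset.sum_nonneg fun r _ => mul_self_nonneg _
  set T := trace (Qᵀ * Q)
  set e := Q *ᵥ (y - ystar)
  have hee : 0 ≤ e ⬝ᵥ e := Finset.sum_nonneg fun r _ => mul_self_nonneg (e r)
  rcases hT.eq_or_lt with hT | hT
  -- `T = 0` forces `Q = 0`; both weights and `σsq / T` then vanish by the convention `x / 0 = 0`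
  · simpa [← hT] using hee
  · have hRHS : (1 - σsq / T) * (e ⬝ᵥ e) * T = T * (e ⬝ᵥ e) - σsq * (e ⬝ᵥ e) := by field_simp
    rw [div_le_iff₀ hT, hRHS]
    linarith

/-- Let `Q ∈ ℝ^{m×n}` be a nonzero matrix with nonzero columns
`q₁,…,qₙ`, let `x₀ ∈ ℝ^m`, and let `x*` be the minimum-norm point of the affine
space `x₀ + Im(Q)`. Then for every `x ∈ x₀ + Im(Q)`:
`Σᵢ (‖qᵢ‖²/‖Q‖²_Frob) · ‖(x − (⟨x,qᵢ⟩/‖qᵢ‖²)qᵢ) − x*‖²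
   ≤ (1 − σ²_min(Q)/‖Q‖²_Frob) · ‖x − x*‖²`,
where `‖Q‖²_Frob = trace (Qᵀ * Q)` and `σ²_min(Q)` is the smallest nonzero
eigenvalue of `QᵀQ`. (Squared Euclidean norms are written as dot products.) -/
theorem stmt4 {m n : ℕ} (Q : Matrix (Fin m) (Fin n) ℝ) (hQ : Q ≠ 0)
    (hcols : ∀ i : Fin n, (fun r => Q r i) ≠ (0 : Fin m → ℝ))
    (x0 xstar : Fin m → ℝ)
    (hmem : ∃ y : Fin n → ℝ, xstar = x0 + Q *ᵥ y)
    (hmin : ∀ y : Fin n → ℝ, xstar ⬝ᵥ xstar ≤ (x0 + Q *ᵥ y) ⬝ᵥ (x0 + Q *ᵥ y))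
    (σsq : ℝ)
    (hσ : IsLeast {μ : ℝ | μ ≠ 0 ∧ ∃ v : Fin n → ℝ, v ≠ 0 ∧ (Qᵀ * Q) *ᵥ v = μ • v} σsq) :
    ∀ x : Fin m → ℝ, (∃ y : Fin n → ℝ, x = x0 + Q *ᵥ y) →
      ∑ i : Fin n,
          ((((fun r => Q r i) ⬝ᵥ fun r => Q r i) / Matrix.trace (Qᵀ * Q)) *
            ((kaczStep Q x i - xstar) ⬝ᵥ (kaczStep Q x i - xstar)))
        ≤ (1 - σsq / Matrix.trace (Qᵀ * Q)) * ((x - xstar) ⬝ᵥ (x - xstar)) :=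
  stmt4_general Q x0 xstar hmem hmin σsq hσ
end

section
/- Let n < m, let A = (E F) be an n×m real matrix with E ∈ ℝ^{n×n} invertible and F ∈ ℝ^{n×(m−n)}, let b ∈ ℝ^n, and set x_0 = [E^{−1}b ; 0] ∈ ℝ^m. Then A x_0 = b, and for every x ∈ ℝ^m with Ax = b one has ‖x_0‖² ≤ (n + ‖E^{−1}F‖²_Frob)·‖x‖². -/
/-!
The top block of `x₀` is `E⁻¹b = (E⁻¹A) x = (I  E⁻¹F) x`, and the squared Frobenius norm of
`(I  E⁻¹F)` is `n + ‖E⁻¹F‖²_Frob`. The Frobenius norm bounds the operator norm by Cauchy–Schwarz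
applied to each row.
-/

open Matrix

theorem Matrix.dotProduct_mulVec_self_le_trace_mul {R m n : Type*} [CommRing R] [LinearOrder R]
    [IsStrictOrderedRing R] [Fintype m] [Fintype n] (N : Matrix m n R) (x : n → R) :
    (N *ᵥ x) ⬝ᵥ (N *ᵥ x) ≤ trace (Nᵀ * N) * (x ⬝ᵥ x) := by
  have row (i : m) : (N *ᵥ x) i * (N *ᵥ x) i ≤ (N i ⬝ᵥ N i) * (x ⬝ᵥ x) := by
    simpa only [mulVec, dotProduct, sq] using Finset.sum_mul_sq_le_sq_mul_sq Finset.univ (N i) x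
  calc (N *ᵥ x) ⬝ᵥ (N *ᵥ x) ≤ ∑ i, (N i ⬝ᵥ N i) * (x ⬝ᵥ x) := Finset.sum_le_sum fun i _ => row i
    _ = trace (Nᵀ * N) * (x ⬝ᵥ x) := by
      rw [← Finset.sum_mul, trace_mul_comm]
      simp only [trace, diag, mul_apply, transpose_apply, dotProduct]

theorem Matrix.trace_transpose_mul_self_fromCols_one {R m n : Type*} [CommRing R] [Fintype m]
    [DecidableEq m] [Fintype n] (M : Matrix m n R) :
    trace ((fromCols (1 : Matrix m m R) M)ᵀ * fromCols 1 M) = Fintype.card m + trace (Mᵀ * M) := by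
  rw [trace_mul_comm, transpose_fromCols, fromCols_mul_fromRows, trace_add, transpose_one, mul_one,
    trace_one, trace_mul_comm]

theorem stmt7_general {n m : ℕ}
    (E : Matrix (Fin n) (Fin n) ℝ) (hE : IsUnit E)
    (F : Matrix (Fin n) (Fin (m - n)) ℝ)
    (A : Matrix (Fin n) (Fin n ⊕ Fin (m - n)) ℝ)
    (hA : A = Matrix.fromCols E F)
    (b : Fin n → ℝ)
    (x0 : Fin n ⊕ Fin (m - n) → ℝ)
    (hx0 : x0 = Sum.elim (E⁻¹ *ᵥ b) 0) :
    A *ᵥ x0 = b ∧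
    ∀ x : Fin n ⊕ Fin (m - n) → ℝ, A *ᵥ x = b →
      x0 ⬝ᵥ x0 ≤ ((n : ℝ) + Matrix.trace ((E⁻¹ * F)ᵀ * (E⁻¹ * F))) * (x ⬝ᵥ x) := by
  have hEd : IsUnit E.det := (isUnit_iff_isUnit_det E).mp hE
  have hx0_dot : x0 ⬝ᵥ x0 = (E⁻¹ *ᵥ b) ⬝ᵥ (E⁻¹ *ᵥ b) := by
    simp [hx0, sumElim_dotProduct_sumElim]
  have hEA : E⁻¹ * A = fromCols 1 (E⁻¹ * F) := by
    rw [hA, mul_fromCols, nonsing_inv_mul E hEd]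
  refine ⟨?_, fun x hx => ?_⟩
  · rw [hA, hx0, fromCols_mulVec_sumElim, mulVec_zero, add_zero, mulVec_mulVec,
      mul_nonsing_inv E hEd, one_mulVec]
  · have hbound := dotProduct_mulVec_self_le_trace_mul (E⁻¹ * A) x
    rwa [← mulVec_mulVec, hx, hEA, trace_transpose_mul_self_fromCols_one, Fintype.card_fin,
      ← hx0_dot] at hbound

/-- Let `n < m`, let `A = (E F)` be an `n×m` real matrix with
`E ∈ ℝ^{n×n}` invertible and `F ∈ ℝ^{n×(m−n)}`, let `b ∈ ℝ^n`, and set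
`x₀ = [E⁻¹b ; 0] ∈ ℝ^m`. Then `A x₀ = b`, and for every `x ∈ ℝ^m` with `Ax = b`
one has `‖x₀‖² ≤ (n + ‖E⁻¹F‖²_Frob)·‖x‖²` (squared Euclidean norms written as
dot products, the squared Frobenius norm as `trace (Mᵀ * M)`). -/
theorem stmt7 {n m : ℕ} (hnm : n < m)
    (E : Matrix (Fin n) (Fin n) ℝ) (hE : IsUnit E)
    (F : Matrix (Fin n) (Fin (m - n)) ℝ)
    (A : Matrix (Fin n) (Fin n ⊕ Fin (m - n)) ℝ)
    (hA : A = Matrix.fromCols E F)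
    (b : Fin n → ℝ)
    (x0 : Fin n ⊕ Fin (m - n) → ℝ)
    (hx0 : x0 = Sum.elim (E⁻¹ *ᵥ b) 0) :
    A *ᵥ x0 = b ∧
    ∀ x : Fin n ⊕ Fin (m - n) → ℝ, A *ᵥ x = b →
      x0 ⬝ᵥ x0 ≤ ((n : ℝ) + Matrix.trace ((E⁻¹ * F)ᵀ * (E⁻¹ * F))) * (x ⬝ᵥ x) :=
  stmt7_general E hE F A hA b x0 hx0
end

section
/- If Q = CD is a k-sparse factorization of Q ∈ ℝ^{m×n} with C ∈ ℝ^{m×p} and D ∈ ℝ^{p×n}, then: (i) for every column c_i of C, |FO(c_i)| ≤ k; (ii) every row of C has at most k nonzero entries (C is k-row sparse); and (iii) every column of D has at most k nonzero entries (every column of D is k-sparse). -/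
open Matrix Finset

/-- The support of a vector: the set of indices of its nonzero entries. -/
noncomputable def vsupp {α : Type*} [Fintype α] (v : α → ℝ) : Finset α := by
  classical exact Finset.univ.filter fun i => v i ≠ 0

/-- The forward overlap `FO(cᵢ)` of the `i`-th column of `C`: the set of column
indices `j ≥ i` whose support overlaps the support of column `i`. -/
noncomputable def FO {α β : Type*} [Fintype α] [Fintype β] [LinearOrder β]
    (C : Matrix α β ℝ) (i : β) : Finset β := by
  classical
  exact Finset.univ.filter fun j =>
    i ≤ j ∧ ((vsupp fun r => C r i) ∩ (vsupp fun r => C r j)).Nonempty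

/-- `Q = CD` is a `k`-sparse factorization: every column of `C` and every row of
`D` is nonzero, and for every column `d_j` of `D`,
`|⋃_{i ∈ supp(d_j)} FO(c_i)| ≤ k`. -/
noncomputable def IsSparseFactorization {α β γ : Type*}
    [Fintype α] [Fintype β] [Fintype γ] [LinearOrder γ]
    (Q : Matrix α β ℝ) (C : Matrix α γ ℝ) (D : Matrix γ β ℝ) (k : ℕ) : Prop := by
  classical
  exact Q = C * D ∧
    (∀ i : γ, (fun r => C r i) ≠ (0 : α → ℝ)) ∧
    (∀ i : γ, (fun j => D i j) ≠ (0 : β → ℝ)) ∧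
    ∀ j : β, ((vsupp fun i => D i j).biUnion fun i => FO C i).card ≤ k


/-!
Each row of `D` is nonzero, so every `FO(cᵢ)` is one of the sets whose union is bounded for some
column of `D`; this gives (i). Each column of `C` is nonzero, so `i ∈ FO(cᵢ)`, and the support of a
column `d_j` lies inside `⋃_{i ∈ supp(d_j)} FO(cᵢ)`; this gives (iii). Finally, if `i₀` is the first
nonzero position of row `r` of `C`, every later nonzero position `j` of that row has `r` in the
common support of `c_{i₀}` and `c_j`, so the support of the row lies in `FO(c_{i₀})` and (i) applies.
-/

section Support

variable {α β : Type*} [Fintype α] [Fintype β]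

@[simp]
theorem mem_vsupp {v : α → ℝ} {i : α} : i ∈ vsupp v ↔ v i ≠ 0 := by
  classical
  simp [vsupp]

theorem vsupp_nonempty_iff {v : α → ℝ} : (vsupp v).Nonempty ↔ v ≠ 0 := by
  simp [Finset.Nonempty, funext_iff]

variable [LinearOrder β]

theorem mem_FO {C : Matrix α β ℝ} {i j : β} :
    j ∈ FO C i ↔ i ≤ j ∧ ∃ r, C r i ≠ 0 ∧ C r j ≠ 0 := by
  classical
  simp [FO, Finset.Nonempty]

theorem self_mem_FO {C : Matrix α β ℝ} {i : β} (hC : (fun r => C r i) ≠ 0) : i ∈ FO C i := by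
  obtain ⟨r, hr⟩ := vsupp_nonempty_iff.mpr hC
  rw [mem_vsupp] at hr
  exact mem_FO.mpr ⟨le_rfl, r, hr, hr⟩

theorem vsupp_row_subset_FO_min' (C : Matrix α β ℝ) (r : α)
    (hr : (vsupp fun j => C r j).Nonempty) :
    (vsupp fun j => C r j) ⊆ FO C ((vsupp fun j => C r j).min' hr) := by
  intro j hj
  have hmin := Finset.min'_mem _ hr
  exact mem_FO.mpr ⟨Finset.min'_le _ _ hj, r, mem_vsupp.mp hmin, mem_vsupp.mp hj⟩

end Support

namespace IsSparseFactorization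

variable {α β γ : Type*} [Fintype α] [Fintype β] [Fintype γ] [LinearOrder γ]
  {Q : Matrix α β ℝ} {C : Matrix α γ ℝ} {D : Matrix γ β ℝ} {k : ℕ}

theorem card_FO_le (h : IsSparseFactorization Q C D k) (i : γ) : (FO C i).card ≤ k := by
  classical
  obtain ⟨-, -, hD, hk⟩ := h
  obtain ⟨j, hj⟩ := vsupp_nonempty_iff.mpr (hD i)
  calc (FO C i).card
      ≤ ((vsupp fun i => D i j).biUnion fun i => FO C i).card :=
        Finset.card_le_card (Finset.subset_biUnion_of_mem _ (mem_vsupp.mpr (mem_vsupp.mp hj)))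
    _ ≤ k := by convert hk j -- `hk` uses the definition's own classical `DecidableEq γ`

theorem card_vsupp_row_C_le (h : IsSparseFactorization Q C D k) (r : α) :
    (vsupp fun j => C r j).card ≤ k := by
  rcases (vsupp fun j => C r j).eq_empty_or_nonempty with hr | hr
  · simp [hr]
  · exact (Finset.card_le_card (vsupp_row_subset_FO_min' C r hr)).trans (h.card_FO_le _)

theorem card_vsupp_col_D_le (h : IsSparseFactorization Q C D k) (j : β) :
    (vsupp fun i => D i j).card ≤ k := by
  classical
  obtain ⟨-, hC, -, hk⟩ := h
  calc (vsupp fun i => D i j).card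
      ≤ ((vsupp fun i => D i j).biUnion fun i => FO C i).card :=
        Finset.card_le_card fun i hi => Finset.mem_biUnion.mpr ⟨i, hi, self_mem_FO (hC i)⟩
    _ ≤ k := by convert hk j

end IsSparseFactorization

/-- If `Q = CD` is a `k`-sparse factorization of
`Q ∈ ℝ^{m×n}` with `C ∈ ℝ^{m×p}` and `D ∈ ℝ^{p×n}`, then: (i) for every column
`cᵢ` of `C`, `|FO(cᵢ)| ≤ k`; (ii) every row of `C` has at most `k` nonzero
entries (`C` is `k`-row sparse); and (iii) every column of `D` has at most `k`
nonzero entries. -/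
theorem stmt8 {m n p : ℕ} (Q : Matrix (Fin m) (Fin n) ℝ)
    (C : Matrix (Fin m) (Fin p) ℝ) (D : Matrix (Fin p) (Fin n) ℝ) (k : ℕ)
    (h : IsSparseFactorization Q C D k) :
    (∀ i : Fin p, (FO C i).card ≤ k) ∧
    (∀ r : Fin m, (vsupp fun j => C r j).card ≤ k) ∧
    (∀ j : Fin n, (vsupp fun i => D i j).card ≤ k) :=
  ⟨h.card_FO_le, h.card_vsupp_row_C_le, h.card_vsupp_col_D_le⟩
end
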